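/- Let p be a prime and let S be a nontrivial finite set of words over {0, …, p−1} that contains the empty word and is closed under prefixes. Then the following are equivalent: (1) there exists a set Ω of words such that S is a tile of a tiling of T_p with translate set Ω, i.e., every edge (w, w ++ [c]) of the complete p-ary tree can be written uniquely as (ω ++ v, ω ++ v ++ [c]) with ω ∈ Ω, v ∈ S, v ++ [c] ∈ S; (2) the p-adic balls {B_ℓ : ℓ ∈ L(S)} form a partition of ℤ_p; (3) for every non-leaf s ∈ S and every c ∈ Fin p, s ++ [c] ∈ S. Moreover, if these hold, then Ω may be chosen to be the submonoid of the free monoid of words (under concatenation) generated by the set of leaves L(S). -/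

import Mathlib

/-- `ν(w) = Σ_{k<n} a_k p^k` for a word `w = [a₀, …, a_{n-1}]` over `{0, …, p-1}`. -/
def wordVal (p : ℕ) (w : List (Fin p)) : ℕ :=
  w.foldr (fun a acc => a.val + p * acc) 0

/-- The `p`-adic ball `B_w = {x ∈ ℤ_p : ‖x − ν(w)‖ ≤ p^{−n}}` associated to a word `w`
of length `n`. -/
def padicBall (p : ℕ) [Fact p.Prime] (w : List (Fin p)) : Set ℤ_[p] :=
  {x : ℤ_[p] | ‖x - (wordVal p w : ℤ_[p])‖ ≤ (p : ℝ) ^ (-(w.length : ℤ))}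

/-- The leaves of a set `S` of words: elements of `S` none of whose children lies
in `S`. -/
def leaves (p : ℕ) (S : Set (List (Fin p))) : Set (List (Fin p)) :=
  {s ∈ S | ∀ c : Fin p, s ++ [c] ∉ S}

/-- The balls indexed by the words of `W` form a partition of `ℤ_p`: they are nonempty,
pairwise disjoint and cover `ℤ_p`. -/
def IsBallPartition (p : ℕ) [Fact p.Prime] (W : Set (List (Fin p))) : Prop :=
  (∀ w ∈ W, (padicBall p w).Nonempty) ∧
  (∀ v ∈ W, ∀ w ∈ W, v ≠ w → Disjoint (padicBall p v) (padicBall p w)) ∧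
  (⋃ w ∈ W, padicBall p w) = Set.univ

/-- `S` is a tile of a tiling of the complete `p`-ary tree with translate set `Ω`:
every edge `(w, w ++ [c])` of the tree can be written uniquely as
`(ω ++ v, ω ++ v ++ [c])` with `ω ∈ Ω`, `v ∈ S` and `v ++ [c] ∈ S`. -/
def IsTile (p : ℕ) (S Ω : Set (List (Fin p))) : Prop :=
  ∀ (w : List (Fin p)) (c : Fin p),
    ∃! ωv : List (Fin p) × List (Fin p),
      ωv.1 ∈ Ω ∧ ωv.2 ∈ S ∧ ωv.2 ++ [c] ∈ S ∧ w = ωv.1 ++ ωv.2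

/-- The submonoid of the free monoid of words generated by the leaves of `S`, viewed as a
set of words. -/
def leafSubmonoid (p : ℕ) (S : Set (List (Fin p))) : Set (List (Fin p)) :=
  {w : List (Fin p) |
    FreeMonoid.ofList w ∈ Submonoid.closure (FreeMonoid.ofList '' leaves p S)}

/-!
Two balls `B_v`, `B_w` meet only if one of `v`, `w` is a prefix of the other (compare `ν(v)` and
`ν(w)` modulo `p^|v|`), so the leaf balls are disjoint. They cover `ℤ_p` when every non-leaf of
`S` has all `p` children, because then the deepest node of `S` whose ball contains a point is a
leaf; conversely, the leaf ball containing `ν(s ++ [c])` shows that `s ++ [c] ∈ S`.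

With full splitting, every word is read greedily as a product of leaves followed by a non-leaf
of `S`, uniquely since leaves form an antichain: this is the tiling by the leaf submonoid.
Conversely, in any tiling the edges at the root force `[] ∈ Ω` and `[c] ∈ S` for all `c`; a
nonempty `ω ∈ Ω ∩ S` with a child in `S` would then cover that edge twice, so every edge leaving
a non-leaf of `S` is covered with `ω = []`.
-/

section Words

variable {p : ℕ}

theorem wordVal_eq_ofDigits (w : List (Fin p)) :
    wordVal p w = Nat.ofDigits p (w.map Fin.val) := by
  induction w with
  | nil => rfl
  | cons a w ih => simp [wordVal, Nat.ofDigits_cons, ← ih]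

theorem wordVal_append_singleton (w : List (Fin p)) (c : Fin p) :
    wordVal p (w ++ [c]) = wordVal p w + p ^ w.length * c := by
  simp [wordVal_eq_ofDigits, Nat.ofDigits_append]

theorem wordVal_mod_pow (hp : 0 < p) (w : List (Fin p)) (k : ℕ) :
    wordVal p w % p ^ k = wordVal p (w.take k) := by
  rw [wordVal_eq_ofDigits, wordVal_eq_ofDigits, List.map_take,
    Nat.ofDigits_mod_pow_eq_ofDigits_take k hp _ (by simp)]

theorem eq_of_wordVal_eq (hp : 1 < p) {v w : List (Fin p)} (hl : v.length = w.length)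
    (h : wordVal p v = wordVal p w) : v = w := by
  rw [wordVal_eq_ofDigits, wordVal_eq_ofDigits] at h
  exact List.map_injective_iff.mpr Fin.val_injective <|
    Nat.ofDigits_inj_of_len_eq hp (by simpa) (by simp) (by simp) h

theorem prefix_of_wordVal_modEq (hp : 1 < p) {v w : List (Fin p)} (hl : v.length ≤ w.length)
    (h : wordVal p v ≡ wordVal p w [MOD p ^ v.length]) : v <+: w := by
  rw [Nat.ModEq, wordVal_mod_pow hp.le, wordVal_mod_pow hp.le, List.take_length] at h
  exact List.prefix_iff_eq_take.mpr (eq_of_wordVal_eq hp (by simpa using hl) h)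

end Words

section Balls

variable {p : ℕ} [Fact p.Prime]

theorem PadicInt.pow_p_dvd_natCast_sub_iff (n a b : ℕ) :
    (p : ℤ_[p]) ^ n ∣ (a - b : ℤ_[p]) ↔ b ≡ a [MOD p ^ n] := by
  rw [Nat.modEq_iff_dvd, Nat.cast_pow, ← PadicInt.pow_p_dvd_int_iff]
  push_cast
  rfl

theorem mem_padicBall_iff {w : List (Fin p)} {x : ℤ_[p]} :
    x ∈ padicBall p w ↔ (p : ℤ_[p]) ^ w.length ∣ x - wordVal p w := by
  rw [padicBall, Set.mem_ofPred_eq, PadicInt.norm_le_pow_iff_mem_span_pow,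
    Ideal.mem_span_singleton]

theorem wordVal_mem_padicBall (w : List (Fin p)) : (wordVal p w : ℤ_[p]) ∈ padicBall p w :=
  mem_padicBall_iff.mpr (by simp)

theorem mem_padicBall_nil (x : ℤ_[p]) : x ∈ padicBall p [] :=
  mem_padicBall_iff.mpr (by simp)

theorem prefix_of_mem_padicBall {v w : List (Fin p)} {x : ℤ_[p]} (hv : x ∈ padicBall p v)
    (hw : x ∈ padicBall p w) (hl : v.length ≤ w.length) : v <+: w := by
  rw [mem_padicBall_iff] at hv hw
  have hdvd : (p : ℤ_[p]) ^ v.length ∣ (wordVal p w - wordVal p v : ℤ_[p]) := by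
    simpa using dvd_sub hv ((pow_dvd_pow _ hl).trans hw)
  exact prefix_of_wordVal_modEq (Fact.out : p.Prime).one_lt hl
    ((PadicInt.pow_p_dvd_natCast_sub_iff _ _ _).mp hdvd)

theorem prefix_or_prefix_of_mem_padicBall {v w : List (Fin p)} {x : ℤ_[p]}
    (hv : x ∈ padicBall p v) (hw : x ∈ padicBall p w) : v <+: w ∨ w <+: v :=
  (le_total v.length w.length).imp (prefix_of_mem_padicBall hv hw)
    (prefix_of_mem_padicBall hw hv)

theorem exists_mem_padicBall_append_singleton {w : List (Fin p)} {x : ℤ_[p]}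
    (hx : x ∈ padicBall p w) : ∃ c : Fin p, x ∈ padicBall p (w ++ [c]) := by
  obtain ⟨y, hy⟩ := mem_padicBall_iff.mp hx
  obtain ⟨z, hz⟩ := Ideal.mem_span_singleton.mp (y.appr_spec 1)
  refine ⟨⟨y.appr 1, by simpa using y.appr_lt 1⟩, mem_padicBall_iff.mpr ⟨z, ?_⟩⟩
  simp only [wordVal_append_singleton, List.length_append, List.length_singleton, pow_succ]
  push_cast
  linear_combination hy + (p : ℤ_[p]) ^ w.length * hz

end Balls

section Tree

variable {p : ℕ} {S : Set (List (Fin p))}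

theorem eq_of_mem_leaves_of_prefix (hpref : ∀ v ∈ S, ∀ w : List (Fin p), w <+: v → w ∈ S)
    {u v : List (Fin p)} (hu : u ∈ leaves p S) (hv : v ∈ S) (h : u <+: v) : u = v := by
  obtain ⟨t, rfl⟩ := h
  cases t with
  | nil => simp
  | cons c t => exact absurd (hpref _ hv (u ++ [c]) ⟨t, by simp⟩) (hu.2 c)

theorem nil_notMem_leaves (hpref : ∀ v ∈ S, ∀ w : List (Fin p), w <+: v → w ∈ S)
    (hnontriv : ∃ w ∈ S, w ≠ []) : [] ∉ leaves p S := by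
  obtain ⟨w, hw, hne⟩ := hnontriv
  exact fun h => hne (eq_of_mem_leaves_of_prefix hpref h hw List.nil_prefix).symm

end Tree

section LeafSubmonoid

variable {p : ℕ} {S : Set (List (Fin p))}

theorem nil_mem_leafSubmonoid : [] ∈ leafSubmonoid p S :=
  (Submonoid.closure (FreeMonoid.ofList '' leaves p S)).one_mem

theorem append_mem_leafSubmonoid {a b : List (Fin p)} (ha : a ∈ leafSubmonoid p S)
    (hb : b ∈ leafSubmonoid p S) : a ++ b ∈ leafSubmonoid p S :=
  (Submonoid.closure (FreeMonoid.ofList '' leaves p S)).mul_mem ha hb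

theorem mem_leafSubmonoid_of_mem_leaves {u : List (Fin p)} (hu : u ∈ leaves p S) :
    u ∈ leafSubmonoid p S :=
  Submonoid.subset_closure (s := FreeMonoid.ofList '' leaves p S) ⟨u, hu, rfl⟩

@[elab_as_elim]
theorem leafSubmonoid_induction {motive : (w : List (Fin p)) → w ∈ leafSubmonoid p S → Prop}
    (nil : motive [] nil_mem_leafSubmonoid)
    (append : ∀ u (hu : u ∈ leaves p S) r (hr : r ∈ leafSubmonoid p S), motive r hr →
      motive (u ++ r) (append_mem_leafSubmonoid (mem_leafSubmonoid_of_mem_leaves hu) hr))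
    {w : List (Fin p)} (hw : w ∈ leafSubmonoid p S) : motive w hw := by
  refine Submonoid.closure_induction_left (s := FreeMonoid.ofList '' leaves p S)
    (motive := fun m hm => motive m.toList hm) nil ?_ (x := FreeMonoid.ofList w) hw
  rintro _ ⟨u, hu, rfl⟩ y hy ih
  exact append u hu y.toList hy ih

theorem exists_leafSubmonoid_append (hnil : [] ∈ S \ leaves p S)
    (hfull : ∀ s ∈ S \ leaves p S, ∀ c : Fin p, s ++ [c] ∈ S) (w : List (Fin p)) :
    ∃ ω ∈ leafSubmonoid p S, ∃ v ∈ S \ leaves p S, w = ω ++ v := by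
  induction w using List.reverseRecOn with
  | nil => exact ⟨[], nil_mem_leafSubmonoid, [], hnil, rfl⟩
  | append_singleton w c ih =>
    obtain ⟨ω, hω, v, hv, rfl⟩ := ih
    by_cases hleaf : v ++ [c] ∈ leaves p S
    · refine ⟨ω ++ (v ++ [c]), ?_, [], hnil, by simp⟩
      exact append_mem_leafSubmonoid hω (mem_leafSubmonoid_of_mem_leaves hleaf)
    · exact ⟨ω, hω, v ++ [c], ⟨hfull v hv c, hleaf⟩, by simp⟩

theorem eq_of_append_eq_append_of_mem_leafSubmonoid
    (hpref : ∀ v ∈ S, ∀ w : List (Fin p), w <+: v → w ∈ S) {ω₁ ω₂ v₁ v₂ : List (Fin p)}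
    (hω₁ : ω₁ ∈ leafSubmonoid p S) (hω₂ : ω₂ ∈ leafSubmonoid p S)
    (hv₁ : v₁ ∈ S \ leaves p S) (hv₂ : v₂ ∈ S \ leaves p S) (h : ω₁ ++ v₁ = ω₂ ++ v₂) :
    ω₁ = ω₂ := by
  have not_prefix {u v : List (Fin p)} (hu : u ∈ leaves p S) (hv : v ∈ S \ leaves p S) :
      ¬u <+: v := fun h => hv.2 (eq_of_mem_leaves_of_prefix hpref hu hv.1 h ▸ hu)
  induction hω₁ using leafSubmonoid_induction generalizing ω₂ with
  | nil =>
    induction hω₂ using leafSubmonoid_induction with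
    | nil => rfl
    | append u hu r _ _ => exact (not_prefix hu hv₁ ⟨r ++ v₂, by simpa using h.symm⟩).elim
  | append u₁ hu₁ r₁ hr₁ ih =>
    induction hω₂ using leafSubmonoid_induction with
    | nil => exact (not_prefix hu₁ hv₂ ⟨r₁ ++ v₁, by simpa using h⟩).elim
    | append u₂ hu₂ r₂ hr₂ _ =>
      have hu : u₁ = u₂ := by
        have h₁ : u₁ <+: u₁ ++ r₁ ++ v₁ := ⟨r₁ ++ v₁, by simp⟩
        have h₂ : u₂ <+: u₁ ++ r₁ ++ v₁ := ⟨r₂ ++ v₂, by simp [h]⟩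
        rcases List.prefix_or_prefix_of_prefix h₁ h₂ with h₁₂ | h₂₁
        · exact eq_of_mem_leaves_of_prefix hpref hu₁ hu₂.1 h₁₂
        · exact (eq_of_mem_leaves_of_prefix hpref hu₂ hu₁.1 h₂₁).symm
      subst hu
      rw [ih hr₂ (by simpa using h)]

end LeafSubmonoid

section Tiling

variable {p : ℕ} {S Ω : Set (List (Fin p))}

theorem isTile_leafSubmonoid (hroot : [] ∈ S)
    (hpref : ∀ v ∈ S, ∀ w : List (Fin p), w <+: v → w ∈ S) (hnontriv : ∃ w ∈ S, w ≠ [])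
    (hfull : ∀ s ∈ S \ leaves p S, ∀ c : Fin p, s ++ [c] ∈ S) :
    IsTile p S (leafSubmonoid p S) := by
  intro w c
  obtain ⟨ω, hω, v, hv, rfl⟩ :=
    exists_leafSubmonoid_append ⟨hroot, nil_notMem_leaves hpref hnontriv⟩ hfull w
  refine ⟨(ω, v), ⟨hω, hv.1, hfull v hv c, rfl⟩, ?_⟩
  rintro ⟨ω', v'⟩ ⟨hω', hv', hv'c, h⟩
  dsimp only at hω' hv' hv'c h
  have hv'' : v' ∈ S \ leaves p S := ⟨hv', fun hleaf => hleaf.2 c hv'c⟩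
  obtain rfl := eq_of_append_eq_append_of_mem_leafSubmonoid hpref hω' hω hv'' hv h.symm
  rw [List.append_cancel_left h]

theorem IsTile.nil_mem_and_singleton_mem (hΩ : IsTile p S Ω) (c : Fin p) :
    [] ∈ Ω ∧ [c] ∈ S := by
  obtain ⟨⟨ω, v⟩, ⟨hω, -, hvc, h⟩, -⟩ := hΩ [] c
  obtain ⟨rfl, rfl⟩ := List.append_eq_nil_iff.mp h.symm
  exact ⟨hω, hvc⟩

-- the edge `(ω, ω ++ [d])` is covered both by `(ω, [])` and by `([], ω)`
theorem IsTile.eq_nil_of_mem (hΩ : IsTile p S Ω) (hroot : [] ∈ S) {ω : List (Fin p)} {d : Fin p}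
    (hωΩ : ω ∈ Ω) (hω : ω ∈ S) (hωd : ω ++ [d] ∈ S) : ω = [] := by
  obtain ⟨hnil, hd⟩ := hΩ.nil_mem_and_singleton_mem d
  have h := (hΩ ω d).unique (y₁ := (ω, [])) (y₂ := ([], ω)) ⟨hωΩ, hroot, hd, by simp⟩
    ⟨hnil, hω, hωd, rfl⟩
  exact congrArg Prod.fst h

theorem IsTile.append_singleton_mem (hΩ : IsTile p S Ω) (hroot : [] ∈ S)
    (hpref : ∀ v ∈ S, ∀ w : List (Fin p), w <+: v → w ∈ S) :
    ∀ s ∈ S \ leaves p S, ∀ c : Fin p, s ++ [c] ∈ S := by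
  rintro s ⟨hs, hsleaf⟩ c
  obtain ⟨c₀, hc₀⟩ : ∃ c₀ : Fin p, s ++ [c₀] ∈ S := by
    by_contra! h
    exact hsleaf ⟨hs, h⟩
  obtain ⟨⟨ω, v⟩, ⟨hωΩ, -, hvc, rfl⟩, -⟩ := hΩ s c
  obtain ⟨d, hd⟩ : ∃ d, ω ++ [d] <+: ω ++ v ++ [c₀] := by
    obtain ⟨d, t, hdt⟩ : ∃ d t, v ++ [c₀] = d :: t := List.exists_cons_of_ne_nil (by simp)
    exact ⟨d, t, by simp [hdt]⟩
  obtain rfl : ω = [] :=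
    hΩ.eq_nil_of_mem hroot hωΩ (hpref _ hs ω (List.prefix_append ω v)) (hpref _ hc₀ _ hd)
  simpa using hvc

end Tiling

section BallPartition

variable {p : ℕ} [Fact p.Prime] {S : Set (List (Fin p))}

theorem exists_mem_leaves_mem_padicBall (hfin : S.Finite) (hroot : [] ∈ S)
    (hfull : ∀ s ∈ S \ leaves p S, ∀ c : Fin p, s ++ [c] ∈ S) (x : ℤ_[p]) :
    ∃ ℓ ∈ leaves p S, x ∈ padicBall p ℓ := by
  obtain ⟨w, ⟨hwS, hxw⟩, hmax⟩ := Set.Finite.exists_maximalFor List.length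
    {w ∈ S | x ∈ padicBall p w} (hfin.subset fun _ hw => hw.1) ⟨[], hroot, mem_padicBall_nil x⟩
  refine ⟨w, ⟨hwS, fun c hc => ?_⟩, hxw⟩
  obtain ⟨d, hxd⟩ := exists_mem_padicBall_append_singleton hxw
  have hwd := hfull w ⟨hwS, fun hleaf => hleaf.2 c hc⟩ d
  simpa using hmax ⟨hwd, hxd⟩ (by simp)

theorem isBallPartition_leaves (hfin : S.Finite) (hroot : [] ∈ S)
    (hpref : ∀ v ∈ S, ∀ w : List (Fin p), w <+: v → w ∈ S)
    (hfull : ∀ s ∈ S \ leaves p S, ∀ c : Fin p, s ++ [c] ∈ S) :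
    IsBallPartition p (leaves p S) := by
  refine ⟨fun w _ => ⟨_, wordVal_mem_padicBall w⟩, fun v hv w hw hne => ?_, ?_⟩
  · refine Set.disjoint_left.mpr fun x hxv hxw => hne ?_
    rcases prefix_or_prefix_of_mem_padicBall hxv hxw with h | h
    · exact eq_of_mem_leaves_of_prefix hpref hv hw.1 h
    · exact (eq_of_mem_leaves_of_prefix hpref hw hv.1 h).symm
  · refine Set.eq_univ_of_forall fun x => ?_
    obtain ⟨ℓ, hℓ, hxℓ⟩ := exists_mem_leaves_mem_padicBall hfin hroot hfull x
    exact Set.mem_biUnion hℓ hxℓ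

theorem IsBallPartition.append_singleton_mem
    (hpref : ∀ v ∈ S, ∀ w : List (Fin p), w <+: v → w ∈ S)
    (hpart : IsBallPartition p (leaves p S)) :
    ∀ s ∈ S \ leaves p S, ∀ c : Fin p, s ++ [c] ∈ S := by
  rintro s ⟨hs, hsleaf⟩ c
  obtain ⟨-, -, hcover⟩ := hpart
  obtain ⟨ℓ, hℓ, hxℓ⟩ := Set.mem_iUnion₂.mp
    (hcover ▸ Set.mem_univ (wordVal p (s ++ [c]) : ℤ_[p]))
  rcases prefix_or_prefix_of_mem_padicBall (wordVal_mem_padicBall (s ++ [c])) hxℓ with h | h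
  · exact hpref ℓ hℓ.1 _ h
  · rcases List.prefix_concat_iff.mp h with rfl | h
    · exact hℓ.1
    · exact (hsleaf (eq_of_mem_leaves_of_prefix hpref hℓ hs h ▸ hℓ)).elim

end BallPartition

/-- For a nontrivial finite subtree `S` of the `p`-ary tree rooted at the empty word, the
following are equivalent: (1) `S` is a tile of some tiling of the `p`-ary tree;
(2) the balls of the leaves of `S` partition `ℤ_p`; (3) every non-leaf node of `S` splits
completely in `S`. Moreover, in that case the translate set `Ω` may be chosen to be the
submonoid of the free monoid of words generated by the leaves of `S`. -/
theorem tile_equivalence (p : ℕ) [Fact p.Prime]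
    (S : Set (List (Fin p))) (hfin : S.Finite) (hroot : ([] : List (Fin p)) ∈ S)
    (hpref : ∀ v ∈ S, ∀ w : List (Fin p), w <+: v → w ∈ S)
    (hnontriv : ∃ w ∈ S, w ≠ []) :
    ([ ∃ Ω : Set (List (Fin p)), IsTile p S Ω,
       IsBallPartition p (leaves p S),
       ∀ s ∈ S \ leaves p S, ∀ c : Fin p, s ++ [c] ∈ S ].TFAE) ∧
    ((∃ Ω : Set (List (Fin p)), IsTile p S Ω) → IsTile p S (leafSubmonoid p S)) := by
  have full_of_tile : (∃ Ω, IsTile p S Ω) → ∀ s ∈ S \ leaves p S, ∀ c : Fin p, s ++ [c] ∈ S :=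
    fun ⟨_, hΩ⟩ => hΩ.append_singleton_mem hroot hpref
  refine ⟨?_, fun h => isTile_leafSubmonoid hroot hpref hnontriv (full_of_tile h)⟩
  tfae_have 1 → 3 := full_of_tile
  tfae_have 3 → 1 := fun h => ⟨_, isTile_leafSubmonoid hroot hpref hnontriv h⟩
  tfae_have 2 → 3 := IsBallPartition.append_singleton_mem hpref
  tfae_have 3 → 2 := isBallPartition_leaves hfin hroot hpref
  tfae_finish
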